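/- Let n ≥ 1 and define, on smooth functions f : ℝ^n × ℝ^n × ℝ^n → ℂ, the operators P_s f = 𝔼(X_s f) + (n − 2) X_s f − (1/2) r² (D_t f) and P_t f = 𝔼(X_t f) + (n − 2) X_t f + (1/2) r² (D_s f). If f is harmonic, i.e. Δ f = Σ_{j=1}^n ( ∂²f/∂x_j² + ∂²f/∂y_j² ) = 0 identically, then P_s f and P_t f are again harmonic: Δ(P_s f) = 0 and Δ(P_t f) = 0. -/

import Mathlib

open Complex Finset Matrix

noncomputable section

/-- A point of `ℝ^n × ℝ^n × ℝ^n`, with coordinates `(x, y, q)`. -/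
abbrev Vec (n : ℕ) := (Fin n → ℝ) × (Fin n → ℝ) × (Fin n → ℝ)

/-- Partial derivative in the variable `x_j`. -/
noncomputable def pdx (n : ℕ) (j : Fin n) (f : Vec n → ℂ) : Vec n → ℂ :=
  fun p => deriv (fun t => f (Function.update p.1 j t, p.2.1, p.2.2)) (p.1 j)

/-- Partial derivative in the variable `y_j`. -/
noncomputable def pdy (n : ℕ) (j : Fin n) (f : Vec n → ℂ) : Vec n → ℂ :=
  fun p => deriv (fun t => f (p.1, Function.update p.2.1 j t, p.2.2)) (p.2.1 j)

/-- Partial derivative in the variable `q_j`. -/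
noncomputable def pdq (n : ℕ) (j : Fin n) (f : Vec n → ℂ) : Vec n → ℂ :=
  fun p => deriv (fun t => f (p.1, p.2.1, Function.update p.2.2 j t)) (p.2.2 j)

/-- The symplectic Dirac operator `D_s f = Σ_j (i q_j ∂f/∂y_j − ∂²f/∂q_j∂x_j)`. -/
noncomputable def Ds (n : ℕ) (f : Vec n → ℂ) : Vec n → ℂ :=
  fun p => ∑ j : Fin n, (Complex.I * (p.2.2 j : ℂ) * pdy n j f p - pdq n j (pdx n j f) p)

/-- The twisted symplectic Dirac operator `D_t f = Σ_j (i q_j ∂f/∂x_j + ∂²f/∂y_j∂q_j)`. -/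
noncomputable def Dt (n : ℕ) (f : Vec n → ℂ) : Vec n → ℂ :=
  fun p => ∑ j : Fin n, (Complex.I * (p.2.2 j : ℂ) * pdx n j f p + pdy n j (pdq n j f) p)

/-- The Fischer dual `X_s f = Σ_j (y_j ∂f/∂q_j + i q_j x_j f)`. -/
noncomputable def Xs (n : ℕ) (f : Vec n → ℂ) : Vec n → ℂ :=
  fun p => ∑ j : Fin n, ((p.2.1 j : ℂ) * pdq n j f p + Complex.I * (p.2.2 j : ℂ) * (p.1 j : ℂ) * f p)

/-- The Fischer dual `X_t f = Σ_j (x_j ∂f/∂q_j − i y_j q_j f)`. -/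
noncomputable def Xt (n : ℕ) (f : Vec n → ℂ) : Vec n → ℂ :=
  fun p => ∑ j : Fin n, ((p.1 j : ℂ) * pdq n j f p - Complex.I * (p.2.1 j : ℂ) * (p.2.2 j : ℂ) * f p)

/-- The Euler operator `𝔼 f = Σ_j (x_j ∂f/∂x_j + y_j ∂f/∂y_j)`. -/
noncomputable def EulerOp (n : ℕ) (f : Vec n → ℂ) : Vec n → ℂ :=
  fun p => ∑ j : Fin n, ((p.1 j : ℂ) * pdx n j f p + (p.2.1 j : ℂ) * pdy n j f p)

/-- The Laplacian in the `(x,y)` variables. -/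
noncomputable def Lap (n : ℕ) (f : Vec n → ℂ) : Vec n → ℂ :=
  fun p => ∑ j : Fin n, (pdx n j (pdx n j f) p + pdy n j (pdy n j f) p)
/-- Multiplication by `r² = Σ_j (x_j² + y_j²)`. -/
noncomputable def r2 (n : ℕ) (p : Vec n) : ℂ :=
  ((∑ j : Fin n, ((p.1 j) ^ 2 + (p.2.1 j) ^ 2) : ℝ) : ℂ)

/-- The rescaled extremal projection `P_s f = (𝔼 + n − 2) X_s f − (1/2) r² D_t f`. -/
noncomputable def PsOp (n : ℕ) (f : Vec n → ℂ) : Vec n → ℂ :=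
  fun p => EulerOp n (Xs n f) p + ((n : ℂ) - 2) * Xs n f p - (1 / 2 : ℂ) * r2 n p * Dt n f p

/-- The rescaled extremal projection `P_t f = (𝔼 + n − 2) X_t f + (1/2) r² D_s f`. -/
noncomputable def PtOp (n : ℕ) (f : Vec n → ℂ) : Vec n → ℂ :=
  fun p => EulerOp n (Xt n f) p + ((n : ℂ) - 2) * Xt n f p + (1 / 2 : ℂ) * r2 n p * Ds n f p

/-!
Write every operator through directional derivatives `dirDeriv v f = Df(·) v`: the Laplacian
is taken along the directions `e_i` (the `x_j`- and `y_j`-directions), and `𝔼` and `r²` are built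
from the dual coordinate functionals `ℓ_i`. For any such dual pair the Leibniz rule
`Δ(ℓ g) = 2 ∂_{∇ℓ} g + ℓ Δg` gives `Δ 𝔼 = (𝔼 + 2) Δ` and `Δ r² = r² Δ + 4 𝔼 + 2N`, `N` the number
of directions; so whenever `ΔX = c D` and `ΔD = 0`, the function `(𝔼 + N/2 − 2) X − (c/4) r² D`
is harmonic. For harmonic `f` the same Leibniz rule gives `Δ X_s f = 2 D_t f` and
`Δ X_t f = −2 D_s f`, while `D_s f` and `D_t f` are harmonic because `Δ` commutes with
constant-coefficient derivatives and the coefficients `q_j` have zero `(x, y)`-gradient.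
-/

open scoped ContDiff

@[fun_prop]
theorem Complex.contDiff_ofReal {n : WithTop ℕ∞} : ContDiff ℝ n (fun x : ℝ => (x : ℂ)) :=
  ofRealCLM.contDiff

section DirectionalDerivative

variable {E : Type*} [NormedAddCommGroup E] [NormedSpace ℝ E] {f g : E → ℂ}

def dirDeriv (v : E) (f : E → ℂ) : E → ℂ := fun p => fderiv ℝ f p v

@[fun_prop]
theorem ContDiff.dirDeriv (hf : ContDiff ℝ ∞ f) (v : E) : ContDiff ℝ ∞ (dirDeriv v f) :=
  (hf.fderiv_right (by simp)).clm_apply contDiff_const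

theorem dirDeriv_add (hf : Differentiable ℝ f) (hg : Differentiable ℝ g) (v : E) :
    dirDeriv v (fun p => f p + g p) = fun p => dirDeriv v f p + dirDeriv v g p := by
  funext p
  simp [dirDeriv, fderiv_fun_add (hf p) (hg p)]

theorem dirDeriv_sub (hf : Differentiable ℝ f) (hg : Differentiable ℝ g) (v : E) :
    dirDeriv v (fun p => f p - g p) = fun p => dirDeriv v f p - dirDeriv v g p := by
  funext p
  simp [dirDeriv, fderiv_fun_sub (hf p) (hg p)]

theorem dirDeriv_const_mul (hf : Differentiable ℝ f) (c : ℂ) (v : E) :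
    dirDeriv v (fun p => c * f p) = fun p => c * dirDeriv v f p := by
  funext p
  simp [dirDeriv, fderiv_const_mul (hf p) c]

theorem dirDeriv_sum {κ : Type*} [Fintype κ] {F : κ → E → ℂ} (hF : ∀ k, Differentiable ℝ (F k))
    (v : E) : dirDeriv v (fun p => ∑ k, F k p) = fun p => ∑ k, dirDeriv v (F k) p := by
  funext p
  simp [dirDeriv, fderiv_fun_sum fun k _ => hF k p]

theorem dirDeriv_ofReal_mul (ℓ : E →L[ℝ] ℝ) (hg : Differentiable ℝ g) (v : E) :
    dirDeriv v (fun p => (ℓ p : ℂ) * g p) = fun p => (ℓ v : ℂ) * g p + ℓ p * dirDeriv v g p := by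
  funext p
  have hℓ : HasFDerivAt (fun p => (ℓ p : ℂ)) (ofRealCLM.comp ℓ) p := (ofRealCLM.comp ℓ).hasFDerivAt
  simp only [dirDeriv]
  rw [(hℓ.fun_mul (hg p).hasFDerivAt).fderiv]
  simp
  ring

theorem dirDeriv_const (c : ℂ) (v : E) : dirDeriv v (fun _ => c) = fun _ => 0 := by
  funext p
  simp [dirDeriv]

theorem dirDeriv_zero (f : E → ℂ) : dirDeriv 0 f = fun _ => 0 := by
  funext p
  simp [dirDeriv]

theorem sum_mul_dirDeriv {ι : Type*} [Fintype ι] (c : ι → ℝ) (e : ι → E) (f : E → ℂ) (p : E) :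
    ∑ i, (c i : ℂ) * dirDeriv (e i) f p = dirDeriv (∑ i, c i • e i) f p := by
  simp [dirDeriv, Complex.real_smul]

theorem dirDeriv_comm (hf : ContDiff ℝ 2 f) (v w : E) :
    dirDeriv v (dirDeriv w f) = dirDeriv w (dirDeriv v f) := by
  have hf' : Differentiable ℝ (fderiv ℝ f) := (hf.fderiv_right le_rfl).differentiable one_ne_zero
  have hsecond (p : E) (v w : E) :
      dirDeriv v (dirDeriv w f) p = fderiv ℝ (fderiv ℝ f) p v w := by
    change fderiv ℝ (fun y => fderiv ℝ f y w) p v = _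
    simp [fderiv_clm_apply (hf' p) (differentiableAt_const w)]
  funext p
  rw [hsecond, hsecond]
  exact hf.contDiffAt.isSymmSndFDerivAt (by simp) v w

theorem deriv_comp_eq_dirDeriv (hf : Differentiable ℝ f) {γ : ℝ → E} {t : ℝ} {v : E}
    (hγ : HasDerivAt γ v t) : deriv (fun s => f (γ s)) t = dirDeriv v f (γ t) :=
  ((hf (γ t)).hasFDerivAt.comp_hasDerivAt t hγ).deriv

end DirectionalDerivative

section Laplacian

variable {E ι : Type*} [NormedAddCommGroup E] [NormedSpace ℝ E] [Fintype ι] (e : ι → E)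
  {f g : E → ℂ}

def lapAlong (f : E → ℂ) : E → ℂ := fun p => ∑ i, dirDeriv (e i) (dirDeriv (e i) f) p

theorem lapAlong_add (hf : ContDiff ℝ ∞ f) (hg : ContDiff ℝ ∞ g) :
    lapAlong e (fun p => f p + g p) = fun p => lapAlong e f p + lapAlong e g p := by
  funext p
  simp (disch := fun_prop (disch := simp)) only [lapAlong, dirDeriv_add, Finset.sum_add_distrib]

theorem lapAlong_sub (hf : ContDiff ℝ ∞ f) (hg : ContDiff ℝ ∞ g) :
    lapAlong e (fun p => f p - g p) = fun p => lapAlong e f p - lapAlong e g p := by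
  funext p
  simp (disch := fun_prop (disch := simp)) only [lapAlong, dirDeriv_sub, Finset.sum_sub_distrib]

theorem lapAlong_const_mul (hf : ContDiff ℝ ∞ f) (c : ℂ) :
    lapAlong e (fun p => c * f p) = fun p => c * lapAlong e f p := by
  funext p
  simp (disch := fun_prop (disch := simp)) only [lapAlong, dirDeriv_const_mul, Finset.mul_sum]

theorem lapAlong_sum {κ : Type*} [Fintype κ] {F : κ → E → ℂ} (hF : ∀ k, ContDiff ℝ ∞ (F k)) :
    lapAlong e (fun p => ∑ k, F k p) = fun p => ∑ k, lapAlong e (F k) p := by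
  funext p
  simp (disch := fun_prop (disch := simp)) only [lapAlong, dirDeriv_sum]
  exact Finset.sum_comm

theorem lapAlong_dirDeriv (hf : ContDiff ℝ ∞ f) (v : E) :
    lapAlong e (dirDeriv v f) = dirDeriv v (lapAlong e f) := by
  funext p
  unfold lapAlong
  rw [dirDeriv_sum fun i => by fun_prop (disch := simp)]
  refine Finset.sum_congr rfl fun i _ => ?_
  rw [dirDeriv_comm (hf.of_le (by norm_cast)) (e i) v,
    dirDeriv_comm ((hf.dirDeriv (e i)).of_le (by norm_cast)) (e i) v]

theorem lapAlong_ofReal_mul (ℓ : E →L[ℝ] ℝ) (hg : ContDiff ℝ ∞ g) :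
    lapAlong e (fun p => (ℓ p : ℂ) * g p) =
      fun p => 2 * dirDeriv (∑ i, ℓ (e i) • e i) g p + ℓ p * lapAlong e g p := by
  funext p
  simp (disch := fun_prop (disch := simp)) only [lapAlong, dirDeriv_ofReal_mul, dirDeriv_add,
    dirDeriv_const_mul]
  rw [← sum_mul_dirDeriv, Finset.mul_sum, Finset.mul_sum, ← Finset.sum_add_distrib]
  refine Finset.sum_congr rfl fun i _ => ?_
  ring

end Laplacian

section DualFamily

variable {E ι : Type*} [NormedAddCommGroup E] [NormedSpace ℝ E] [Fintype ι]
  {e : ι → E} (ℓ : ι → E →L[ℝ] ℝ) {f g : E → ℂ}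

def eulerAlong (e : ι → E) (f : E → ℂ) : E → ℂ :=
  fun p => ∑ i, (ℓ i p : ℂ) * dirDeriv (e i) f p

def normSqAlong (p : E) : ℝ := ∑ i, ℓ i p ^ 2

@[fun_prop]
theorem ContDiff.eulerAlong (hf : ContDiff ℝ ∞ f) : ContDiff ℝ ∞ (eulerAlong ℓ e f) := by
  unfold _root_.eulerAlong
  fun_prop

@[fun_prop]
theorem contDiff_normSqAlong : ContDiff ℝ ∞ (normSqAlong ℓ) := by
  unfold normSqAlong
  fun_prop

theorem eulerAlong_const_mul (hf : Differentiable ℝ f) (c : ℂ) :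
    eulerAlong ℓ e (fun p => c * f p) = fun p => c * eulerAlong ℓ e f p := by
  funext p
  simp only [eulerAlong, dirDeriv_const_mul hf, Finset.mul_sum]
  exact Finset.sum_congr rfl fun i _ => by ring

def extremalProj (e : ι → E) (m c : ℂ) (X D : E → ℂ) : E → ℂ :=
  fun p => eulerAlong ℓ e X p + (m - 2) * X p - c / 4 * normSqAlong ℓ p * D p

variable {ℓ} [DecidableEq ι]

theorem sum_smul_eq_of_dual (hdual : ∀ i k, ℓ i (e k) = if i = k then 1 else 0) (i : ι) :
    ∑ k, ℓ i (e k) • e k = e i := by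
  simp [hdual]

theorem lapAlong_eulerAlong (hdual : ∀ i k, ℓ i (e k) = if i = k then 1 else 0)
    (hf : ContDiff ℝ ∞ f) :
    lapAlong e (eulerAlong ℓ e f) =
      fun p => eulerAlong ℓ e (lapAlong e f) p + 2 * lapAlong e f p := by
  unfold eulerAlong
  rw [lapAlong_sum _ fun i => by fun_prop]
  funext p
  simp only [lapAlong_ofReal_mul _ _ (hf.dirDeriv _), sum_smul_eq_of_dual hdual,
    lapAlong_dirDeriv _ hf, Finset.sum_add_distrib, ← Finset.mul_sum]
  rw [add_comm]
  rfl

theorem lapAlong_normSqAlong_mul (hdual : ∀ i k, ℓ i (e k) = if i = k then 1 else 0)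
    (hf : ContDiff ℝ ∞ f) :
    lapAlong e (fun p => (normSqAlong ℓ p : ℂ) * f p) = fun p =>
      2 * Fintype.card ι * f p + 4 * eulerAlong ℓ e f p + normSqAlong ℓ p * lapAlong e f p := by
  have hsplit : (fun p => (normSqAlong ℓ p : ℂ) * f p) =
      fun p => ∑ i, (ℓ i p : ℂ) * ((ℓ i p : ℂ) * f p) := by
    funext p
    simp only [normSqAlong, Complex.ofReal_sum, Complex.ofReal_pow, Finset.sum_mul]
    exact Finset.sum_congr rfl fun i _ => by ring
  have hterm (i : ι) (p : E) : lapAlong e (fun p => (ℓ i p : ℂ) * ((ℓ i p : ℂ) * f p)) p =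
      2 * f p + 4 * ((ℓ i p : ℂ) * dirDeriv (e i) f p) + (ℓ i p : ℂ) ^ 2 * lapAlong e f p := by
    rw [lapAlong_ofReal_mul _ _ (by fun_prop), lapAlong_ofReal_mul _ _ hf,
      sum_smul_eq_of_dual hdual, dirDeriv_ofReal_mul _ (hf.differentiable (by simp)), hdual,
      if_pos rfl]
    push_cast
    ring
  rw [hsplit, lapAlong_sum _ fun i => by fun_prop]
  funext p
  simp only [hterm, eulerAlong, normSqAlong, Finset.sum_add_distrib, ← Finset.mul_sum,
    Finset.sum_const, Finset.card_univ, Complex.ofReal_sum, Complex.ofReal_pow, Finset.sum_mul]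
  ring

theorem lapAlong_extremalProj_eq_zero (hdual : ∀ i k, ℓ i (e k) = if i = k then 1 else 0)
    {m c : ℂ} (hcard : (Fintype.card ι : ℂ) = 2 * m) {X D : E → ℂ}
    (hX : ContDiff ℝ ∞ X) (hD : ContDiff ℝ ∞ D)
    (hlapX : lapAlong e X = fun p => c * D p) (hlapD : lapAlong e D = fun _ => 0) :
    lapAlong e (extremalProj ℓ e m c X D) = fun _ => 0 := by
  have hsplit : extremalProj ℓ e m c X D = fun p =>
      (fun p => eulerAlong ℓ e X p + (m - 2) * X p) p - c / 4 * (normSqAlong ℓ p * D p) := by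
    funext p
    rw [extremalProj]
    ring
  rw [hsplit, lapAlong_sub _ (by fun_prop) (by fun_prop),
    lapAlong_add _ (by fun_prop) (by fun_prop),
    lapAlong_const_mul _ hX, lapAlong_const_mul _ (by fun_prop), lapAlong_eulerAlong hdual hX,
    lapAlong_normSqAlong_mul hdual hD, hlapX, hlapD, hcard,
    eulerAlong_const_mul _ (hD.differentiable (by simp))]
  funext p
  ring

end DualFamily

namespace Vec

variable {n : ℕ}

def dirX (j : Fin n) : Vec n := (Pi.single j 1, 0, 0)
def dirY (j : Fin n) : Vec n := (0, Pi.single j 1, 0)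
def dirQ (j : Fin n) : Vec n := (0, 0, Pi.single j 1)

def coordX (j : Fin n) : Vec n →L[ℝ] ℝ :=
  (ContinuousLinearMap.proj j).comp (ContinuousLinearMap.fst ℝ _ _)
def coordY (j : Fin n) : Vec n →L[ℝ] ℝ :=
  (ContinuousLinearMap.proj j).comp
    ((ContinuousLinearMap.fst ℝ _ _).comp (ContinuousLinearMap.snd ℝ _ _))
def coordQ (j : Fin n) : Vec n →L[ℝ] ℝ :=
  (ContinuousLinearMap.proj j).comp
    ((ContinuousLinearMap.snd ℝ _ _).comp (ContinuousLinearMap.snd ℝ _ _))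

@[simp] theorem coordX_apply (j : Fin n) (p : Vec n) : coordX j p = p.1 j := rfl
@[simp] theorem coordY_apply (j : Fin n) (p : Vec n) : coordY j p = p.2.1 j := rfl
@[simp] theorem coordQ_apply (j : Fin n) (p : Vec n) : coordQ j p = p.2.2 j := rfl

def xyDir : Fin n ⊕ Fin n → Vec n := Sum.elim dirX dirY
def xyCoord : Fin n ⊕ Fin n → Vec n →L[ℝ] ℝ := Sum.elim coordX coordY

theorem xyCoord_xyDir (i k : Fin n ⊕ Fin n) : xyCoord i (xyDir k) = if i = k then 1 else 0 := by
  rcases i with i | i <;> rcases k with k | k <;>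
    simp [xyCoord, xyDir, dirX, dirY, Pi.single_apply, eq_comm]

theorem sum_coordX_smul_xyDir (j : Fin n) : ∑ k, coordX j (xyDir k) • xyDir k = dirX j :=
  sum_smul_eq_of_dual xyCoord_xyDir (.inl j)

theorem sum_coordY_smul_xyDir (j : Fin n) : ∑ k, coordY j (xyDir k) • xyDir k = dirY j :=
  sum_smul_eq_of_dual xyCoord_xyDir (.inr j)

theorem sum_coordQ_smul_xyDir (j : Fin n) : ∑ k, coordQ j (xyDir k) • xyDir k = 0 := by
  simp [xyDir, dirX, dirY]

variable {f : Vec n → ℂ}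

theorem pdx_eq_dirDeriv (hf : Differentiable ℝ f) (j : Fin n) :
    pdx n j f = dirDeriv (dirX j) f := by
  funext p
  have hγ : HasDerivAt (fun t => ((Function.update p.1 j t, p.2.1, p.2.2) : Vec n)) (dirX j)
      (p.1 j) :=
    (hasDerivAt_update p.1 j _).prodMk (hasDerivAt_const _ _)
  rw [pdx, deriv_comp_eq_dirDeriv hf hγ, Function.update_eq_self]

theorem pdy_eq_dirDeriv (hf : Differentiable ℝ f) (j : Fin n) :
    pdy n j f = dirDeriv (dirY j) f := by
  funext p
  have hγ : HasDerivAt (fun t => ((p.1, Function.update p.2.1 j t, p.2.2) : Vec n)) (dirY j)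
      (p.2.1 j) :=
    (hasDerivAt_const _ _).prodMk ((hasDerivAt_update p.2.1 j _).prodMk (hasDerivAt_const _ _))
  rw [pdy, deriv_comp_eq_dirDeriv hf hγ, Function.update_eq_self]

theorem pdq_eq_dirDeriv (hf : Differentiable ℝ f) (j : Fin n) :
    pdq n j f = dirDeriv (dirQ j) f := by
  funext p
  have hγ : HasDerivAt (fun t => ((p.1, p.2.1, Function.update p.2.2 j t) : Vec n)) (dirQ j)
      (p.2.2 j) :=
    (hasDerivAt_const _ _).prodMk ((hasDerivAt_const _ _).prodMk (hasDerivAt_update p.2.2 j _))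
  rw [pdq, deriv_comp_eq_dirDeriv hf hγ, Function.update_eq_self]


theorem Lap_eq_lapAlong (hf : ContDiff ℝ ∞ f) : Lap n f = lapAlong xyDir f := by
  funext p
  simp (disch := fun_prop (disch := simp)) only [Lap, lapAlong, pdx_eq_dirDeriv, pdy_eq_dirDeriv,
    Fintype.sum_sum_type, xyDir, Sum.elim_inl, Sum.elim_inr, Finset.sum_add_distrib]

theorem EulerOp_eq_eulerAlong (hf : Differentiable ℝ f) :
    EulerOp n f = eulerAlong xyCoord xyDir f := by
  funext p
  simp only [EulerOp, eulerAlong, pdx_eq_dirDeriv hf, pdy_eq_dirDeriv hf, Fintype.sum_sum_type,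
    xyDir, xyCoord, Sum.elim_inl, Sum.elim_inr, coordX_apply, coordY_apply, Finset.sum_add_distrib]

theorem r2_eq_normSqAlong (p : Vec n) : r2 n p = normSqAlong xyCoord p := by
  simp only [r2, normSqAlong, Fintype.sum_sum_type, xyCoord, Sum.elim_inl, Sum.elim_inr,
    coordX_apply, coordY_apply, Finset.sum_add_distrib]

theorem Xs_eq_sum (hf : Differentiable ℝ f) : Xs n f = fun p => ∑ j,
          ((coordY j p : ℂ) * dirDeriv (dirQ j) f p +
        I * ((coordQ j p : ℂ) * ((coordX j p : ℂ) * f p))) := by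
  funext p
  simp only [Xs, pdq_eq_dirDeriv hf, coordX_apply, coordY_apply, coordQ_apply, mul_assoc]

theorem Xt_eq_sum (hf : Differentiable ℝ f) : Xt n f = fun p => ∑ j,
          ((coordX j p : ℂ) * dirDeriv (dirQ j) f p -
        I * ((coordQ j p : ℂ) * ((coordY j p : ℂ) * f p))) := by
  funext p
  simp only [Xt, pdq_eq_dirDeriv hf, coordX_apply, coordY_apply, coordQ_apply]
  exact Finset.sum_congr rfl fun j _ => by ring

theorem Dt_eq_sum (hf : ContDiff ℝ ∞ f) : Dt n f = fun p => ∑ j,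
          (I * ((coordQ j p : ℂ) * dirDeriv (dirX j) f p) +
        dirDeriv (dirY j) (dirDeriv (dirQ j) f) p) := by
  funext p
  simp (disch := fun_prop (disch := simp)) only [Dt, pdx_eq_dirDeriv, pdy_eq_dirDeriv,
    pdq_eq_dirDeriv, coordQ_apply, mul_assoc]

theorem Ds_eq_sum (hf : ContDiff ℝ ∞ f) : Ds n f = fun p => ∑ j,
          (I * ((coordQ j p : ℂ) * dirDeriv (dirY j) f p) -
        dirDeriv (dirQ j) (dirDeriv (dirX j) f) p) := by
  funext p
  simp (disch := fun_prop (disch := simp)) only [Ds, pdx_eq_dirDeriv, pdy_eq_dirDeriv,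
    pdq_eq_dirDeriv, coordQ_apply, mul_assoc]

@[fun_prop]
theorem contDiff_Xs (hf : ContDiff ℝ ∞ f) : ContDiff ℝ ∞ (Xs n f) := by
  rw [Xs_eq_sum (hf.differentiable (by simp))]
  fun_prop

@[fun_prop]
theorem contDiff_Xt (hf : ContDiff ℝ ∞ f) : ContDiff ℝ ∞ (Xt n f) := by
  rw [Xt_eq_sum (hf.differentiable (by simp))]
  fun_prop

@[fun_prop]
theorem contDiff_Dt (hf : ContDiff ℝ ∞ f) : ContDiff ℝ ∞ (Dt n f) := by
  rw [Dt_eq_sum hf]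
  fun_prop

@[fun_prop]
theorem contDiff_Ds (hf : ContDiff ℝ ∞ f) : ContDiff ℝ ∞ (Ds n f) := by
  rw [Ds_eq_sum hf]
  fun_prop

theorem lapAlong_Xs (hf : ContDiff ℝ ∞ f) (hharm : lapAlong xyDir f = fun _ => 0) :
    lapAlong xyDir (Xs n f) = fun p => 2 * Dt n f p := by
  rw [Xs_eq_sum (hf.differentiable (by simp)), Dt_eq_sum hf,
    lapAlong_sum _ fun j => by fun_prop]
  funext p
  rw [Finset.mul_sum]
  refine Finset.sum_congr rfl fun j _ => ?_
  simp (disch := fun_prop) only [lapAlong_add, lapAlong_const_mul, lapAlong_ofReal_mul,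
    lapAlong_dirDeriv, hharm, dirDeriv_const, sum_coordX_smul_xyDir, sum_coordY_smul_xyDir,
    sum_coordQ_smul_xyDir, dirDeriv_zero]
  ring

theorem lapAlong_Xt (hf : ContDiff ℝ ∞ f) (hharm : lapAlong xyDir f = fun _ => 0) :
    lapAlong xyDir (Xt n f) = fun p => -2 * Ds n f p := by
  rw [Xt_eq_sum (hf.differentiable (by simp)), Ds_eq_sum hf,
    lapAlong_sum _ fun j => by fun_prop]
  funext p
  rw [Finset.mul_sum]
  refine Finset.sum_congr rfl fun j _ => ?_
  simp (disch := fun_prop) only [lapAlong_sub, lapAlong_const_mul, lapAlong_ofReal_mul,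
    lapAlong_dirDeriv, hharm, dirDeriv_const, sum_coordX_smul_xyDir, sum_coordY_smul_xyDir,
    sum_coordQ_smul_xyDir, dirDeriv_zero]
  rw [dirDeriv_comm (hf.of_le (by norm_cast)) (dirX j) (dirQ j)]
  ring

theorem lapAlong_Dt (hf : ContDiff ℝ ∞ f) (hharm : lapAlong xyDir f = fun _ => 0) :
    lapAlong xyDir (Dt n f) = fun _ => 0 := by
  rw [Dt_eq_sum hf, lapAlong_sum _ fun j => by fun_prop]
  funext p
  refine Finset.sum_eq_zero fun j _ => ?_
  simp (disch := fun_prop) only [lapAlong_add, lapAlong_const_mul, lapAlong_ofReal_mul,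
    lapAlong_dirDeriv, hharm, dirDeriv_const, sum_coordQ_smul_xyDir, dirDeriv_zero]
  ring

theorem lapAlong_Ds (hf : ContDiff ℝ ∞ f) (hharm : lapAlong xyDir f = fun _ => 0) :
    lapAlong xyDir (Ds n f) = fun _ => 0 := by
  rw [Ds_eq_sum hf, lapAlong_sum _ fun j => by fun_prop]
  funext p
  refine Finset.sum_eq_zero fun j _ => ?_
  simp (disch := fun_prop) only [lapAlong_sub, lapAlong_const_mul, lapAlong_ofReal_mul,
    lapAlong_dirDeriv, hharm, dirDeriv_const, sum_coordQ_smul_xyDir, dirDeriv_zero]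
  ring

theorem PsOp_eq_extremalProj (hf : ContDiff ℝ ∞ f) :
    PsOp n f = extremalProj xyCoord xyDir n 2 (Xs n f) (Dt n f) := by
  funext p
  rw [PsOp, extremalProj, EulerOp_eq_eulerAlong ((contDiff_Xs hf).differentiable (by simp)), r2_eq_normSqAlong]
  ring

theorem PtOp_eq_extremalProj (hf : ContDiff ℝ ∞ f) :
    PtOp n f = extremalProj xyCoord xyDir n (-2) (Xt n f) (Ds n f) := by
  funext p
  rw [PtOp, extremalProj, EulerOp_eq_eulerAlong ((contDiff_Xt hf).differentiable (by simp)), r2_eq_normSqAlong]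
  ring

theorem card_fin_sum_fin : (Fintype.card (Fin n ⊕ Fin n) : ℂ) = 2 * n := by
  simp only [Fintype.card_sum, Fintype.card_fin, Nat.cast_add]
  ring

end Vec

open Vec

theorem projected_duals_preserve_harmonicity_general
    (n : ℕ) (f : Vec n → ℂ) (hf : ContDiff ℝ (⊤ : ℕ∞) f)
    (hharm : Lap n f = fun _ => 0) :
    Lap n (PsOp n f) = (fun _ => 0) ∧ Lap n (PtOp n f) = (fun _ => 0) := by
  rw [Lap_eq_lapAlong hf] at hharm
  constructor
  · rw [PsOp_eq_extremalProj hf, Lap_eq_lapAlong (by unfold extremalProj; fun_prop)]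
    exact lapAlong_extremalProj_eq_zero xyCoord_xyDir card_fin_sum_fin (contDiff_Xs hf)
      (contDiff_Dt hf) (lapAlong_Xs hf hharm) (lapAlong_Dt hf hharm)
  · rw [PtOp_eq_extremalProj hf, Lap_eq_lapAlong (by unfold extremalProj; fun_prop)]
    exact lapAlong_extremalProj_eq_zero xyCoord_xyDir card_fin_sum_fin (contDiff_Xt hf)
      (contDiff_Ds hf) (lapAlong_Xt hf hharm) (lapAlong_Ds hf hharm)

theorem projected_duals_preserve_harmonicity
    (n : ℕ) (hn : 1 ≤ n) (f : Vec n → ℂ) (hf : ContDiff ℝ (⊤ : ℕ∞) f)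
    (hharm : Lap n f = fun _ => 0) :
    Lap n (PsOp n f) = (fun _ => 0) ∧ Lap n (PtOp n f) = (fun _ => 0) :=
  projected_duals_preserve_harmonicity_general n f hf hharm
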